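/- arXiv:0706.1339 — 2 statements merged into one kernel-verified Lean document; each statement's English description precedes it below -/
import Mathlib

section
/- Let T > 0, C > 0, k ≥ 0, m > k with m ≥ 2, K > 0 and λ, ε, β > 0. Let w : (0,T)×H → ℝ be bounded on bounded subsets of (0,T)×H and satisfy w(t,x) ≤ C(1+‖x‖^k) for all (t,x) ∈ (0,T)×H. Then for every R > 0 there exists a constant M > 0 such that the sup-convolution v = w^{λ,ε,β} satisfies |v(t,x) − v(s,y)| ≤ M(|t−s| + ‖x−y‖_{-2}) for all t,s ∈ (0,T) and all x,y ∈ B_R. -/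
/-!
For `p = (q, z)` the integrand of the sup-convolution is at most `w q z - λ‖z‖^m`, and by the
growth bound this is at most `C(1 + ‖z‖^k) - λ‖z‖^m`, which tends to `-∞` since `k < m`. On the
other hand, for `t ∈ (0,T)` and `‖x‖ < R` the point `p = (t, x)` shows that `v(t,x)` is bounded
below in terms of the bound of `w` on `B_R`. Hence only the points with `‖z‖ ≤ r₀` matter, for
some `r₀` depending on `R`, and there the integrand is Lipschitz in `(t, x)`: since `B` is
self-adjoint, `‖y - z‖₋₁² - ‖x - z‖₋₁² = ⟨B(y - x), (y - z) + (x - z)⟩` is controlled by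
`‖x - y‖₋₂`, and `(s - q)² - (t - q)²` by `|t - s|`.
-/

open scoped InnerProductSpace

/-- The sup-convolution
`w^{λ,ε,β}(t,x) = sup_{(s,y)∈(0,T)×H} { w(s,y) − ‖x−y‖₋₁²/(2ε) − (t−s)²/(2β) − λ e^{2mK(T−s)}‖y‖^m }`,
where `‖z‖₋₁² = ⟨Bz,z⟩`. -/
noncomputable def supConv {H : Type*} [NormedAddCommGroup H] [InnerProductSpace ℝ H]
    (B : H →L[ℝ] H) (T m K lam ε β : ℝ) (w : ℝ → H → ℝ) (t : ℝ) (x : H) : ℝ :=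
  sSup ((fun p : ℝ × H =>
      w p.1 p.2 - ⟪B (x - p.2), x - p.2⟫_ℝ / (2 * ε) - (t - p.1) ^ 2 / (2 * β)
        - lam * Real.exp (2 * m * K * (T - p.1)) * ‖p.2‖ ^ m) ''
    (Set.Ioo 0 T ×ˢ (Set.univ : Set H)))

open Set Filter

theorem csSup_image_le_csSup_image_add {α : Type*} {D : Set α} {f g : α → ℝ} {δ : ℝ}
    (hD : D.Nonempty) (hg : BddAbove (g '' D)) (h : ∀ p ∈ D, ∃ q ∈ D, f p ≤ g q + δ) :
    sSup (f '' D) ≤ sSup (g '' D) + δ :=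
  csSup_le (hD.image f) <| forall_mem_image.2 fun p hp =>
    let ⟨q, hq, hle⟩ := h p hp
    hle.trans (by gcongr; exact le_csSup hg (mem_image_of_mem g hq))

theorem tendsto_mul_one_add_rpow_sub_mul_rpow_atBot (C : ℝ) {k m lam : ℝ} (hm : 0 < m)
    (hkm : k < m) (hlam : 0 < lam) :
    Tendsto (fun r : ℝ => C * (1 + r ^ k) - lam * r ^ m) atTop atBot := by
  have hfactor : Tendsto (fun r : ℝ => r ^ m * (C * r ^ (-(m - k)) - lam)) atTop atBot :=
    (tendsto_rpow_atTop hm).atTop_mul_neg (neg_lt_zero.2 hlam) <| by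
      simpa using ((tendsto_rpow_neg_atTop (sub_pos.2 hkm)).const_mul C).sub_const lam
  refine (tendsto_atBot_add_const_left atTop C hfactor).congr' ?_
  filter_upwards [eventually_gt_atTop 0] with r hr
  have hpow : r ^ m * r ^ (-(m - k)) = r ^ k := by rw [← Real.rpow_add hr]; ring_nf
  linear_combination C * hpow

theorem mul_one_add_rpow_sub_mul_rpow_le_max {C k m lam r₀ L r : ℝ} (hC : 0 ≤ C) (hk : 0 ≤ k)
    (hlam : 0 ≤ lam) (hr₀ : ∀ r ≥ r₀, C * (1 + r ^ k) - lam * r ^ m ≤ L) (hr : 0 ≤ r) :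
    C * (1 + r ^ k) - lam * r ^ m ≤ max (C * (1 + r₀ ^ k)) L := by
  rcases le_or_gt r₀ r with hfar | hnear
  · exact (hr₀ r hfar).trans (le_max_right _ _)
  · have : r ^ k ≤ r₀ ^ k := Real.rpow_le_rpow hr hnear.le hk
    have : 0 ≤ lam * r ^ m := mul_nonneg hlam (Real.rpow_nonneg hr m)
    exact le_max_of_le_left (by nlinarith)

theorem LinearMap.IsSymmetric.inner_map_self_sub_inner_map_self_le {E : Type*}
    [NormedAddCommGroup E] [InnerProductSpace ℝ E] {A : E →ₗ[ℝ] E} (hA : A.IsSymmetric)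
    (u v : E) : ⟪A u, u⟫_ℝ - ⟪A v, v⟫_ℝ ≤ ‖A (u - v)‖ * (‖u‖ + ‖v‖) := by
  have hcross : ⟪A u, v⟫_ℝ = ⟪A v, u⟫_ℝ := by rw [hA u v, real_inner_comm]
  calc ⟪A u, u⟫_ℝ - ⟪A v, v⟫_ℝ = ⟪A (u - v), u + v⟫_ℝ := by
        rw [map_sub, inner_sub_left, inner_add_right, inner_add_right, hcross]; ring
    _ ≤ ‖A (u - v)‖ * ‖u + v‖ := real_inner_le_norm _ _
    _ ≤ ‖A (u - v)‖ * (‖u‖ + ‖v‖) := by gcongr; exact norm_add_le u v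

theorem sq_sub_sq_le_of_mem_Icc {T s t q : ℝ} (hs : s ∈ Icc 0 T) (ht : t ∈ Icc 0 T)
    (hq : q ∈ Icc 0 T) : (s - q) ^ 2 - (t - q) ^ 2 ≤ 2 * T * |t - s| := by
  have hsum : |s + t - 2 * q| ≤ 2 * T :=
    abs_le.2 ⟨by linarith [hs.1, ht.1, hq.2], by linarith [hs.2, ht.2, hq.1]⟩
  calc (s - q) ^ 2 - (t - q) ^ 2 = (s - t) * (s + t - 2 * q) := by ring
    _ ≤ |s - t| * |s + t - 2 * q| := by rw [← abs_mul]; exact le_abs_self _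
    _ ≤ 2 * T * |t - s| := by rw [abs_sub_comm]; nlinarith [abs_nonneg (t - s)]

section SupConvolution

variable {H : Type*} [NormedAddCommGroup H] [InnerProductSpace ℝ H]
  (B : H →L[ℝ] H) (T m K lam ε β : ℝ) (w : ℝ → H → ℝ)

noncomputable def supConvIntegrand (t : ℝ) (x : H) (p : ℝ × H) : ℝ :=
  w p.1 p.2 - ⟪B (x - p.2), x - p.2⟫_ℝ / (2 * ε) - (t - p.1) ^ 2 / (2 * β)
    - lam * Real.exp (2 * m * K * (T - p.1)) * ‖p.2‖ ^ m

variable {B T m K lam ε β w}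

theorem supConv_eq_sSup_image (t : ℝ) (x : H) :
    supConv B T m K lam ε β w t x =
      sSup (supConvIntegrand B T m K lam ε β w t x '' (Ioo 0 T ×ˢ univ)) :=
  rfl

theorem supConvIntegrand_le (hBpos : ∀ x : H, 0 ≤ ⟪B x, x⟫_ℝ) (hm : 0 ≤ m) (hK : 0 ≤ K)
    (hlam : 0 ≤ lam) (hε : 0 ≤ ε) (hβ : 0 ≤ β) (t : ℝ) (x : H) {p : ℝ × H} (hp : p.1 ≤ T) :
    supConvIntegrand B T m K lam ε β w t x p ≤ w p.1 p.2 - lam * ‖p.2‖ ^ m := by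
  have hexp : 1 ≤ Real.exp (2 * m * K * (T - p.1)) :=
    Real.one_le_exp (mul_nonneg (by positivity) (sub_nonneg.2 hp))
  have hpenalty : lam * ‖p.2‖ ^ m ≤ lam * Real.exp (2 * m * K * (T - p.1)) * ‖p.2‖ ^ m := by
    gcongr
    exact le_mul_of_one_le_right hlam hexp
  have hdist : 0 ≤ ⟪B (x - p.2), x - p.2⟫_ℝ / (2 * ε) := div_nonneg (hBpos _) (by positivity)
  have htime : 0 ≤ (t - p.1) ^ 2 / (2 * β) := by positivity
  unfold supConvIntegrand
  linarith

theorem bddAbove_supConvIntegrand_image (hBpos : ∀ x : H, 0 ≤ ⟪B x, x⟫_ℝ) (hm : 0 ≤ m)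
    (hK : 0 ≤ K) (hlam : 0 ≤ lam) (hε : 0 ≤ ε) (hβ : 0 ≤ β) {b : ℝ}
    (hw : ∀ q ∈ Ioo 0 T, ∀ z : H, w q z - lam * ‖z‖ ^ m ≤ b) (t : ℝ) (x : H) :
    BddAbove (supConvIntegrand B T m K lam ε β w t x '' (Ioo 0 T ×ˢ univ)) :=
  ⟨b, forall_mem_image.2 fun p hp =>
    (supConvIntegrand_le hBpos hm hK hlam hε hβ t x hp.1.2.le).trans (hw p.1 hp.1 p.2)⟩

theorem neg_le_supConvIntegrand_self (hm : 0 ≤ m) (hK : 0 ≤ K) (hlam : 0 ≤ lam) {t R M₀ : ℝ}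
    {x : H} (ht : 0 ≤ t) (hw : |w t x| ≤ M₀) (hx : ‖x‖ ≤ R) :
    -(M₀ + lam * Real.exp (2 * m * K * T) * R ^ m) ≤
      supConvIntegrand B T m K lam ε β w t x (t, x) := by
  have hpenalty : lam * Real.exp (2 * m * K * (T - t)) * ‖x‖ ^ m ≤
      lam * Real.exp (2 * m * K * T) * R ^ m := by
    gcongr
    nlinarith [mul_nonneg (mul_nonneg (by positivity : (0 : ℝ) ≤ 2 * m) hK) ht]
  simp only [supConvIntegrand, sub_self, inner_zero_right, zero_div, sub_zero, ne_eq,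
    OfNat.ofNat_ne_zero, not_false_eq_true, zero_pow]
  linarith [neg_le_of_abs_le hw]

theorem supConvIntegrand_sub_le [CompleteSpace H] (hB : IsSelfAdjoint B) (hε : 0 < ε) (hβ : 0 < β)
    {t s q R r : ℝ} {x y z : H} (ht : t ∈ Icc 0 T) (hs : s ∈ Icc 0 T) (hq : q ∈ Icc 0 T)
    (hx : ‖x‖ ≤ R) (hy : ‖y‖ ≤ R) (hz : ‖z‖ ≤ r) :
    supConvIntegrand B T m K lam ε β w t x (q, z) - supConvIntegrand B T m K lam ε β w s y (q, z)
      ≤ ((R + r) / ε + T / β) * (|t - s| + ‖B (x - y)‖) := by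
  have hspace : ⟪B (y - z), y - z⟫_ℝ - ⟪B (x - z), x - z⟫_ℝ ≤ ‖B (x - y)‖ * (2 * (R + r)) :=
    calc _ ≤ ‖B ((y - z) - (x - z))‖ * (‖y - z‖ + ‖x - z‖) :=
          hB.isSymmetric.inner_map_self_sub_inner_map_self_le _ _
      _ ≤ ‖B (x - y)‖ * (2 * (R + r)) := by
          rw [sub_sub_sub_cancel_right, map_sub, norm_sub_rev, ← map_sub]
          gcongr
          linarith [norm_sub_le y z, norm_sub_le x z]
  have htime := sq_sub_sq_le_of_mem_Icc hs ht hq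
  have hR : 0 ≤ (R + r) / ε := div_nonneg (by linarith [norm_nonneg x, norm_nonneg z]) hε.le
  have hT : 0 ≤ T / β := div_nonneg (ht.1.trans ht.2) hβ.le
  calc _ = (⟪B (y - z), y - z⟫_ℝ - ⟪B (x - z), x - z⟫_ℝ) / (2 * ε)
          + ((s - q) ^ 2 - (t - q) ^ 2) / (2 * β) := by
        simp only [supConvIntegrand]; ring
    _ ≤ ‖B (x - y)‖ * (2 * (R + r)) / (2 * ε) + 2 * T * |t - s| / (2 * β) := by gcongr
    _ = (R + r) / ε * ‖B (x - y)‖ + T / β * |t - s| := by field_simp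
    _ ≤ _ := by
        nlinarith [mul_nonneg hR (abs_nonneg (t - s)), mul_nonneg hT (norm_nonneg (B (x - y)))]

theorem supConv_le_supConv_add [CompleteSpace H] (hB : IsSelfAdjoint B)
    (hBpos : ∀ x : H, 0 ≤ ⟪B x, x⟫_ℝ) (hm : 0 ≤ m) (hK : 0 ≤ K) (hlam : 0 ≤ lam) (hε : 0 < ε) (hβ : 0 < β) {r₀ L R t s : ℝ}
    {x y : H} (hr₀ : 0 ≤ r₀) (hfar : ∀ q ∈ Ioo 0 T, ∀ z : H, r₀ < ‖z‖ → w q z - lam * ‖z‖ ^ m ≤ L)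
    (hbdd : BddAbove (supConvIntegrand B T m K lam ε β w s y '' (Ioo 0 T ×ˢ univ)))
    (hlow : L ≤ supConvIntegrand B T m K lam ε β w s y (s, y))
    (ht : t ∈ Ioo 0 T) (hs : s ∈ Ioo 0 T) (hx : ‖x‖ ≤ R) (hy : ‖y‖ ≤ R) :
    supConv B T m K lam ε β w t x ≤
      supConv B T m K lam ε β w s y + ((R + r₀) / ε + T / β) * (|t - s| + ‖B (x - y)‖) := by
  have hδ : 0 ≤ ((R + r₀) / ε + T / β) * (|t - s| + ‖B (x - y)‖) := by
    have : 0 ≤ R := (norm_nonneg x).trans hx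
    have : 0 ≤ T := ht.1.le.trans ht.2.le
    positivity
  rw [supConv_eq_sSup_image, supConv_eq_sSup_image]
  refine csSup_image_le_csSup_image_add ⟨(t, x), ht, trivial⟩ hbdd ?_
  rintro ⟨q, z⟩ ⟨hq : q ∈ Ioo 0 T, -⟩
  rcases le_or_gt ‖z‖ r₀ with hnear | hfar'
  · refine ⟨(q, z), ⟨hq, trivial⟩, ?_⟩
    have := supConvIntegrand_sub_le (w := w) (m := m) (K := K) (lam := lam) hB hε hβ
      (Ioo_subset_Icc_self ht) (Ioo_subset_Icc_self hs) (Ioo_subset_Icc_self hq) hx hy hnear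
    linarith
  · refine ⟨(s, y), ⟨hs, trivial⟩, ?_⟩
    calc _ ≤ w q z - lam * ‖z‖ ^ m := supConvIntegrand_le hBpos hm hK hlam hε.le hβ.le t x hq.2.le
      _ ≤ L := hfar q hq z hfar'
      _ ≤ _ := hlow.trans (le_add_of_nonneg_right hδ)

end SupConvolution

theorem supConv_lipschitz_estimate_general
    {H : Type*} [NormedAddCommGroup H] [InnerProductSpace ℝ H] [CompleteSpace H]
    (B : H →L[ℝ] H) (hBsa : IsSelfAdjoint B) (hBpos : ∀ x : H, 0 ≤ ⟪B x, x⟫_ℝ)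
    (T C k m K lam ε β : ℝ)
    (hT : 0 < T) (hC : 0 < C) (hk : 0 ≤ k) (hkm : k < m)
    (hK : 0 < K) (hlam : 0 < lam) (hε : 0 < ε) (hβ : 0 < β)
    (w : ℝ → H → ℝ)
    (hbdd : ∀ R > (0 : ℝ), ∃ M : ℝ, ∀ t ∈ Set.Ioo (0 : ℝ) T, ∀ x : H, ‖x‖ ≤ R → |w t x| ≤ M)
    (hgrowth : ∀ t ∈ Set.Ioo (0 : ℝ) T, ∀ x : H, w t x ≤ C * (1 + ‖x‖ ^ k)) :
    ∀ R > (0 : ℝ), ∃ M > (0 : ℝ), ∀ t ∈ Set.Ioo (0 : ℝ) T, ∀ s ∈ Set.Ioo (0 : ℝ) T,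
      ∀ x y : H, ‖x‖ < R → ‖y‖ < R →
        |supConv B T m K lam ε β w t x - supConv B T m K lam ε β w s y|
          ≤ M * (|t - s| + ‖B (x - y)‖) := by
  intro R hR
  obtain ⟨M₀, hM₀⟩ := hbdd R hR
  have hm : 0 < m := hk.trans_lt hkm
  obtain ⟨r₀, hr₀⟩ := eventually_atTop.mp
    (((tendsto_mul_one_add_rpow_sub_mul_rpow_atBot C hm hkm hlam).eventually_le_atBot
      (-(M₀ + lam * Real.exp (2 * m * K * T) * R ^ m))).and (eventually_ge_atTop 0))
  have hr₀pos : 0 ≤ r₀ := (hr₀ r₀ le_rfl).2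
  have hbddAbove (s : ℝ) (y : H) := bddAbove_supConvIntegrand_image (w := w) (ε := ε) (β := β)
    hBpos hm.le hK.le hlam.le hε.le hβ.le (fun q hq z => (sub_le_sub_right (hgrowth q hq z) _).trans
      (mul_one_add_rpow_sub_mul_rpow_le_max hC.le hk hlam.le (fun r hr => (hr₀ r hr).1)
        (norm_nonneg z))) s y
  have hcompare : ∀ t ∈ Ioo 0 T, ∀ s ∈ Ioo 0 T, ∀ x y : H, ‖x‖ < R → ‖y‖ < R →
      supConv B T m K lam ε β w t x ≤
        supConv B T m K lam ε β w s y + ((R + r₀) / ε + T / β) * (|t - s| + ‖B (x - y)‖) :=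
    fun t ht s hs x y hx hy => supConv_le_supConv_add hBsa hBpos hm.le hK.le hlam.le hε hβ hr₀pos
      (fun q hq z hz => (sub_le_sub_right (hgrowth q hq z) _).trans (hr₀ _ hz.le).1)
      (hbddAbove s y)
      (neg_le_supConvIntegrand_self hm.le hK.le hlam.le hs.1.le (hM₀ s hs y hy.le) hy.le)
      ht hs hx.le hy.le
  refine ⟨(R + r₀) / ε + T / β, by positivity, fun t ht s hs x y hx hy => abs_sub_le_iff.2 ⟨?_, ?_⟩⟩
  · linarith [hcompare t ht s hs x y hx hy]
  · have := hcompare s hs t ht y x hy hx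
    rw [abs_sub_comm, map_sub, norm_sub_rev, ← map_sub] at this
    linarith

/-- Lemma 4.2(i) (sup-convolution case): if `w` is bounded on bounded sets and
`w(t,x) ≤ C(1+‖x‖^k)` with `k < m`, then for every `R > 0` the sup-convolution
`v = w^{λ,ε,β}` satisfies `|v(t,x) − v(s,y)| ≤ M(|t−s| + ‖x−y‖₋₂)` on `(0,T) × B_R`,
where `‖z‖₋₂ = ‖Bz‖`. -/
theorem supConv_lipschitz_estimate
    {H : Type*} [NormedAddCommGroup H] [InnerProductSpace ℝ H] [CompleteSpace H]
    [TopologicalSpace.SeparableSpace H]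
    (B : H →L[ℝ] H) (hBsa : IsSelfAdjoint B) (hBpos : ∀ x : H, 0 ≤ ⟪B x, x⟫_ℝ)
    (T C k m K lam ε β : ℝ)
    (hT : 0 < T) (hC : 0 < C) (hk : 0 ≤ k) (hkm : k < m) (hm : 2 ≤ m)
    (hK : 0 < K) (hlam : 0 < lam) (hε : 0 < ε) (hβ : 0 < β)
    (w : ℝ → H → ℝ)
    (hbdd : ∀ R > (0 : ℝ), ∃ M : ℝ, ∀ t ∈ Set.Ioo (0 : ℝ) T, ∀ x : H, ‖x‖ ≤ R → |w t x| ≤ M)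
    (hgrowth : ∀ t ∈ Set.Ioo (0 : ℝ) T, ∀ x : H, w t x ≤ C * (1 + ‖x‖ ^ k)) :
    ∀ R > (0 : ℝ), ∃ M > (0 : ℝ), ∀ t ∈ Set.Ioo (0 : ℝ) T, ∀ s ∈ Set.Ioo (0 : ℝ) T,
      ∀ x y : H, ‖x‖ < R → ‖y‖ < R →
        |supConv B T m K lam ε β w t x - supConv B T m K lam ε β w s y|
          ≤ M * (|t - s| + ‖B (x - y)‖) :=
  supConv_lipschitz_estimate_general B hBsa hBpos T C k m K lam ε β hT hC hk hkm hK hlam hε hβ w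
    hbdd hgrowth
end

section
/- Let T > 0, C > 0, k ≥ 0, m > k with m ≥ 2, K > 0. Let w : (0,T)×H → ℝ be bounded on bounded subsets of (0,T)×H and satisfy w(t,x) ≤ C(1+‖x‖^k) for all (t,x) ∈ (0,T)×H. Then for every R > 0 and λ > 0 there exists N > 0 (independent of ε and β) such that for all ε, β > 0, all t ∈ (0,T) and all x ∈ H with ‖x‖ ≤ R one has w^{λ,ε,β}(t,x) = sup_{(s,y)∈(0,T)×H, ‖y‖≤N} { w(s,y) − ‖x−y‖_{-1}²/(2ε) − (t−s)²/(2β) − λ e^{2mK(T−s)} ‖y‖^m }, i.e. the supremum defining the sup-convolution may be restricted to points y with ‖y‖ ≤ N. -/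
open scoped InnerProductSpace

/-!
Since `B ≥ 0` and the exponential weight is at least `1`, the objective at `(s, y)` is at most
`w(s,y) − λ‖y‖^m` plus the time penalty `−(t−s)²/(2β)`. As `k < m`, for large `‖y‖` this falls
below `−M − λ e^{2mKT} R^m`, a lower bound for the objective at `(s, x)` with the same time
penalty, `M` bounding `|w|` on the ball of radius `R`. So every point `(s, y)` with `‖y‖ > N` is
dominated by `(s, x)`, which lies in the restricted domain once `R ≤ N`; neither `N` nor the
comparison involves `ε` or `β`.
-/

open Filter Topology Set

theorem eventually_add_mul_rpow_le_mul_rpow {k m : ℝ} (hkm : k < m) (hm : 0 < m) {lam : ℝ}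
    (hlam : 0 < lam) (A C : ℝ) : ∀ᶠ r in atTop, A + C * r ^ k ≤ lam * r ^ m := by
  have hlim : Tendsto (fun r : ℝ => A * r ^ (-m) + C * r ^ (-(m - k))) atTop (𝓝 0) := by
    simpa using ((tendsto_rpow_neg_atTop hm).const_mul A).add
      ((tendsto_rpow_neg_atTop (sub_pos.2 hkm)).const_mul C)
  filter_upwards [hlim.eventually (gt_mem_nhds hlam), eventually_gt_atTop 0] with r hr hr0
  have hsplit : A + C * r ^ k = (A * r ^ (-m) + C * r ^ (-(m - k))) * r ^ m := by
    rw [add_mul, mul_assoc, mul_assoc, ← Real.rpow_add hr0, ← Real.rpow_add hr0]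
    simp
  rw [hsplit]
  exact mul_le_mul_of_nonneg_right hr.le (Real.rpow_nonneg hr0.le _)

theorem one_le_exp_mul_sub_and_le_exp_mul {c T s : ℝ} (hc : 0 ≤ c) (hs : s ∈ Icc 0 T) :
    1 ≤ Real.exp (c * (T - s)) ∧ Real.exp (c * (T - s)) ≤ Real.exp (c * T) :=
  ⟨Real.one_le_exp (mul_nonneg hc (sub_nonneg.2 hs.2)),
    Real.exp_le_exp.2 (by nlinarith [mul_nonneg hc hs.1])⟩

theorem sSup_image_eq_of_forall_exists_le {α β : Type*} [ConditionallyCompleteLinearOrder β]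
    {f : α → β} {S S' : Set α} (hsub : S' ⊆ S) (h : ∀ p ∈ S, ∃ q ∈ S', f p ≤ f q) :
    sSup (f '' S) = sSup (f '' S') :=
  csSup_eq_csSup_of_forall_exists_le
    (by
      rintro _ ⟨p, hp, rfl⟩
      obtain ⟨q, hq, hpq⟩ := h p hp
      exact ⟨f q, mem_image_of_mem f hq, hpq⟩)
    (by
      rintro _ ⟨q, hq, rfl⟩
      exact ⟨f q, mem_image_of_mem f (hsub hq), le_rfl⟩)

section SupConv

variable {H : Type*} [NormedAddCommGroup H] [InnerProductSpace ℝ H]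

noncomputable def supConvFun (B : H →L[ℝ] H) (T m K lam ε β : ℝ) (w : ℝ → H → ℝ) (t : ℝ)
    (x : H) (p : ℝ × H) : ℝ :=
  w p.1 p.2 - ⟪B (x - p.2), x - p.2⟫_ℝ / (2 * ε) - (t - p.1) ^ 2 / (2 * β)
    - lam * Real.exp (2 * m * K * (T - p.1)) * ‖p.2‖ ^ m

theorem supConv_eq_sSup_image_supConvFun (B : H →L[ℝ] H) (T m K lam ε β : ℝ)
    (w : ℝ → H → ℝ) (t : ℝ) (x : H) :
    supConv B T m K lam ε β w t x
      = sSup (supConvFun B T m K lam ε β w t x '' (Ioo 0 T ×ˢ univ)) :=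
  rfl

theorem supConvFun_le_supConvFun_center {B : H →L[ℝ] H} (hB : ∀ z : H, 0 ≤ ⟪B z, z⟫_ℝ)
    {T m K lam ε β : ℝ} (hε : 0 ≤ ε) {w : ℝ → H → ℝ} {t s : ℝ} {x y : H}
    (h : w s y - lam * Real.exp (2 * m * K * (T - s)) * ‖y‖ ^ m
      ≤ w s x - lam * Real.exp (2 * m * K * (T - s)) * ‖x‖ ^ m) :
    supConvFun B T m K lam ε β w t x (s, y) ≤ supConvFun B T m K lam ε β w t x (s, x) := by
  have hdist : 0 ≤ ⟪B (x - y), x - y⟫_ℝ / (2 * ε) := div_nonneg (hB _) (by positivity)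
  simp only [supConvFun, sub_self, map_zero, inner_zero_left, zero_div]
  linarith

end SupConv

theorem supConv_sup_restricted_general
    {H : Type*} [NormedAddCommGroup H] [InnerProductSpace ℝ H]
    (B : H →L[ℝ] H) (hBpos : ∀ x : H, 0 ≤ ⟪B x, x⟫_ℝ)
    (T C k m K : ℝ)
    (hkm : k < m) (hm : 2 ≤ m) (hK : 0 < K)
    (w : ℝ → H → ℝ)
    (hbdd : ∀ R > (0 : ℝ), ∃ M : ℝ, ∀ t ∈ Set.Ioo (0 : ℝ) T, ∀ x : H, ‖x‖ ≤ R → |w t x| ≤ M)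
    (hgrowth : ∀ t ∈ Set.Ioo (0 : ℝ) T, ∀ x : H, w t x ≤ C * (1 + ‖x‖ ^ k)) :
    ∀ R > (0 : ℝ), ∀ lam > (0 : ℝ), ∃ N > (0 : ℝ), ∀ ε > (0 : ℝ), ∀ β > (0 : ℝ),
      ∀ t ∈ Set.Ioo (0 : ℝ) T, ∀ x : H, ‖x‖ ≤ R →
        supConv B T m K lam ε β w t x =
          sSup ((fun p : ℝ × H =>
              w p.1 p.2 - ⟪B (x - p.2), x - p.2⟫_ℝ / (2 * ε) - (t - p.1) ^ 2 / (2 * β)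
                - lam * Real.exp (2 * m * K * (T - p.1)) * ‖p.2‖ ^ m) ''
            (Set.Ioo 0 T ×ˢ Metric.closedBall (0 : H) N)) := by
  intro R hR lam hlam
  obtain ⟨M, hM⟩ := hbdd R hR
  set E₀ := Real.exp (2 * m * K * T)
  obtain ⟨N₀, hN₀⟩ := eventually_atTop.1 <| eventually_add_mul_rpow_le_mul_rpow hkm
    (by linarith) hlam (C + (M + lam * E₀ * R ^ m)) C
  refine ⟨max N₀ R, lt_max_of_lt_right hR, fun ε hε β _ t _ x hx => ?_⟩
  have hfar : ∀ s ∈ Ioo 0 T, ∀ y : H, max N₀ R < ‖y‖ →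
      w s y - lam * Real.exp (2 * m * K * (T - s)) * ‖y‖ ^ m
        ≤ w s x - lam * Real.exp (2 * m * K * (T - s)) * ‖x‖ ^ m := by
    intro s hs y hy
    obtain ⟨hE₁, hEE₀⟩ := one_le_exp_mul_sub_and_le_exp_mul (c := 2 * m * K) (by positivity)
      (Ioo_subset_Icc_self hs)
    calc _ ≤ C * (1 + ‖y‖ ^ k) - lam * ‖y‖ ^ m := by
          gcongr
          exacts [hgrowth s hs y, le_mul_of_one_le_right hlam.le hE₁]
      _ ≤ -M - lam * E₀ * R ^ m := by linarith [hN₀ ‖y‖ ((le_max_left _ _).trans hy.le)]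
      _ ≤ _ := by
          gcongr
          exact (abs_le.1 (hM s hs x hx)).1
  rw [supConv_eq_sSup_image_supConvFun]
  refine sSup_image_eq_of_forall_exists_le (prod_mono_right (subset_univ _)) ?_
  rintro ⟨s, y⟩ ⟨hs, -⟩
  rcases le_or_gt ‖y‖ (max N₀ R) with hy | hy
  · exact ⟨(s, y), ⟨hs, mem_closedBall_zero_iff.2 hy⟩, le_rfl⟩
  · exact ⟨(s, x), ⟨hs, mem_closedBall_zero_iff.2 (hx.trans (le_max_right _ _))⟩,
      supConvFun_le_supConvFun_center hBpos hε.le (hfar s hs y hy)⟩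

/-- Localization of the supremum in the sup-convolution (equation (4.7) of the paper):
if `w(t,x) ≤ C(1+‖x‖^k)` with `k < m`, then for every `R > 0` and `λ > 0` there is `N > 0`,
independent of `ε` and `β`, such that for `‖x‖ ≤ R` the supremum defining `w^{λ,ε,β}(t,x)`
may be restricted to points `y` with `‖y‖ ≤ N`. -/
theorem supConv_sup_restricted
    {H : Type*} [NormedAddCommGroup H] [InnerProductSpace ℝ H] [CompleteSpace H]
    [TopologicalSpace.SeparableSpace H]
    (B : H →L[ℝ] H) (hBsa : IsSelfAdjoint B) (hBpos : ∀ x : H, 0 ≤ ⟪B x, x⟫_ℝ)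
    (T C k m K : ℝ)
    (hT : 0 < T) (hC : 0 < C) (hk : 0 ≤ k) (hkm : k < m) (hm : 2 ≤ m) (hK : 0 < K)
    (w : ℝ → H → ℝ)
    (hbdd : ∀ R > (0 : ℝ), ∃ M : ℝ, ∀ t ∈ Set.Ioo (0 : ℝ) T, ∀ x : H, ‖x‖ ≤ R → |w t x| ≤ M)
    (hgrowth : ∀ t ∈ Set.Ioo (0 : ℝ) T, ∀ x : H, w t x ≤ C * (1 + ‖x‖ ^ k)) :
    ∀ R > (0 : ℝ), ∀ lam > (0 : ℝ), ∃ N > (0 : ℝ), ∀ ε > (0 : ℝ), ∀ β > (0 : ℝ),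
      ∀ t ∈ Set.Ioo (0 : ℝ) T, ∀ x : H, ‖x‖ ≤ R →
        supConv B T m K lam ε β w t x =
          sSup ((fun p : ℝ × H =>
              w p.1 p.2 - ⟪B (x - p.2), x - p.2⟫_ℝ / (2 * ε) - (t - p.1) ^ 2 / (2 * β)
                - lam * Real.exp (2 * m * K * (T - p.1)) * ‖p.2‖ ^ m) ''
            (Set.Ioo 0 T ×ˢ Metric.closedBall (0 : H) N)) :=
  supConv_sup_restricted_general B hBpos T C k m K hkm hm hK w hbdd hgrowth
end
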